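/- Let U=(U_{i,j}) be a measure-preserving ℤ²-action on a probability space (X,B,ν), let J be the σ-algebra of U-invariant sets, let F be a U-invariant sub-σ-algebra of B (i.e. U_{i,j}(F)=F for all i,j), and let C be a sub-σ-algebra of F. Then for every f ∈ L²(F), the conditional expectation E[f | J∨C] is F-measurable. -/

import Mathlib

open MeasureTheory

/-- The σ-algebra of subsets of `X` that are `m`-measurable and invariant under every map
of the family `U : ι → X → X`. -/
def invariantSets {X ι : Type*} (m : MeasurableSpace X) (U : ι → X → X) :
    MeasurableSpace X where
  MeasurableSet' s := MeasurableSet[m] s ∧ ∀ i, U i ⁻¹' s = s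
  measurableSet_empty := ⟨m.measurableSet_empty, fun _ => by simp⟩
  measurableSet_compl := fun s hs =>
    ⟨m.measurableSet_compl s hs.1, fun i => by rw [Set.preimage_compl, hs.2 i]⟩
  measurableSet_iUnion := fun f hf =>
    ⟨m.measurableSet_iUnion f (fun n => (hf n).1), fun i => by
      rw [Set.preimage_iUnion]
      exact Set.iUnion_congr fun n => (hf n).2 i⟩

/-!
Write `G = J ⊔ C`. The heart of the matter is that `E[· | F]` maps `G`-measurable functions to
`G`-measurable ones. For `1_{A ∩ B}` with `A ∈ J` and `B ∈ C ⊆ F` one pulls `1_B` out; since `F` is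
`U`-invariant and `U` preserves `ν`, `E[1_A | F]` is a.e. invariant, hence a.e. `J`-measurable.
A π-λ argument and the `L¹`-continuity of `E[· | F]` extend this to all integrable
`G`-measurable functions. Then for `h = E[f | G]` the difference `d = h - E[h | F]` is
`G`-measurable and orthogonal to `L²(F)`, so `‖d‖² = ⟪d, f⟫ - ⟪d, E[h | F]⟫ = 0`.
-/

open Set Filter Topology MeasurableSpace

theorem tendsto_indicator_biUnion_range {α β : Type*} [Zero β] [TopologicalSpace β]
    (f : ℕ → Set α) (g : α → β) (x : α) :
    Tendsto (fun n => (⋃ i ∈ Finset.range n, f i).indicator g x) atTop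
      (𝓝 ((⋃ i, f i).indicator g x)) := by
  refine tendsto_const_nhds.congr' ?_
  by_cases hx : x ∈ ⋃ i, f i
  · obtain ⟨i, hi⟩ := mem_iUnion.1 hx
    filter_upwards [eventually_gt_atTop i] with n hn
    rw [indicator_of_mem hx, indicator_of_mem (mem_iUnion₂.2 ⟨i, Finset.mem_range.2 hn, hi⟩)]
  · filter_upwards with n
    rw [indicator_of_notMem hx, indicator_of_notMem fun h => hx (iUnion₂_subset_iUnion _ f h)]

section PiSystem

variable {α : Type*} (m₁ m₂ : MeasurableSpace α)

theorem isPiSystem_image2_inter :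
    IsPiSystem (image2 (· ∩ ·) {s | MeasurableSet[m₁] s} {t | MeasurableSet[m₂] t}) := by
  rintro _ ⟨s₁, hs₁, t₁, ht₁, rfl⟩ _ ⟨s₂, hs₂, t₂, ht₂, rfl⟩ -
  exact ⟨s₁ ∩ s₂, hs₁.inter hs₂, t₁ ∩ t₂, ht₁.inter ht₂, inter_inter_inter_comm _ _ _ _⟩

theorem sup_eq_generateFrom_image2_inter :
    m₁ ⊔ m₂ =
      generateFrom (image2 (· ∩ ·) {s | MeasurableSet[m₁] s} {t | MeasurableSet[m₂] t}) := by
  refine le_antisymm (sup_le (fun s hs => ?_) fun t ht => ?_) (generateFrom_le ?_)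
  · exact measurableSet_generateFrom ⟨s, hs, univ, MeasurableSet.univ, inter_univ s⟩
  · exact measurableSet_generateFrom ⟨univ, MeasurableSet.univ, t, ht, univ_inter t⟩
  · rintro _ ⟨s, hs, t, ht, rfl⟩
    exact (le_sup_left (b := m₂) s hs).inter (le_sup_right (a := m₁) t ht)

end PiSystem

section CondExp

variable {α : Type*} {m G m0 : MeasurableSpace α} {μ : Measure α} [IsFiniteMeasure μ]

theorem integrable_indicator_one {s : Set α} (hs : MeasurableSet[m0] s) :
    Integrable (s.indicator (1 : α → ℝ)) μ :=
  (integrable_const 1).indicator hs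

theorem aestronglyMeasurable_condExp_of_tendsto (hm : m ≤ m0) (hG : G ≤ m0)
    {fs : ℕ → α → ℝ} {f : α → ℝ} (bound : α → ℝ)
    (hfs_meas : ∀ n, AEStronglyMeasurable (fs n) μ)
    (h_bound : Integrable bound μ) (hfs_bound : ∀ n, ∀ᵐ x ∂μ, ‖fs n x‖ ≤ bound x)
    (hfs : ∀ᵐ x ∂μ, Tendsto (fun n => fs n x) atTop (𝓝 (f x)))
    (hP : ∀ n, AEStronglyMeasurable[G] (μ[fs n|m]) μ) :
    AEStronglyMeasurable[G] (μ[f|m]) μ := by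
  have hlim := (isClosed_aestronglyMeasurable (p := 1) (F := ℝ) (μ := μ) hG).mem_of_tendsto
    (tendsto_condExpL1_of_dominated_convergence hm bound hfs_meas h_bound hfs_bound hfs)
    (Eventually.of_forall fun n => (hP n).congr (condExp_ae_eq_condExpL1 hm _))
  exact hlim.congr (condExp_ae_eq_condExpL1 hm f).symm

theorem aestronglyMeasurable_condExp_indicator_of_isPiSystem (hm : m ≤ m0) (hG : G ≤ m0)
    {S : Set (Set α)} (hGS : G = generateFrom S) (hS : IsPiSystem S)
    (hP : ∀ s ∈ S, AEStronglyMeasurable[G] (μ[s.indicator (1 : α → ℝ)|m]) μ) {t : Set α}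
    (ht : MeasurableSet[G] t) : AEStronglyMeasurable[G] (μ[t.indicator (1 : α → ℝ)|m]) μ := by
  induction t, ht using induction_on_inter hGS hS with
  | empty => simpa using aestronglyMeasurable_const
  | basic t ht => exact hP t ht
  | compl t ht ih =>
    have hsub :=
      condExp_sub (integrable_const (1 : ℝ)) (integrable_indicator_one (μ := μ) (hG t ht)) m
    rw [condExp_const hm] at hsub
    rw [indicator_compl]
    exact (aestronglyMeasurable_one.sub ih).congr hsub.symm
  | iUnion f hdisj hf ih =>
    have hfm i : MeasurableSet[m0] (f i) := hG _ (hf i)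
    refine aestronglyMeasurable_condExp_of_tendsto hm hG 1
      (fs := fun n => (⋃ i ∈ Finset.range n, f i).indicator (1 : α → ℝ))
      (fun n => (aestronglyMeasurable_const.indicator
        (Finset.measurableSet_biUnion _ fun i _ => hfm i)))
      (integrable_const 1) (fun n => Eventually.of_forall fun x => ?_)
      (Eventually.of_forall (tendsto_indicator_biUnion_range f 1)) fun n => ?_
    · simpa using norm_indicator_le_norm_self (1 : α → ℝ) x
    · rw [Finset.indicator_biUnion _ _ (hdisj.set_pairwise _),
        ← Finset.sum_fn (Finset.range n) fun i => (f i).indicator (1 : α → ℝ)]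
      refine AEStronglyMeasurable.congr ?_
        (condExp_finsetSum (fun i _ => integrable_indicator_one (hfm i)) m).symm
      induction n with
      | zero => simpa using aestronglyMeasurable_zero
      | succ n ihn =>
        rw [Finset.sum_range_succ]
        exact ihn.add (ih n)

theorem isClosed_setOf_aestronglyMeasurable_condExp (hm : m ≤ m0) (hG : G ≤ m0) :
    IsClosed {f : lpMeas ℝ ℝ G 1 μ | AEStronglyMeasurable[G] (μ[(f : α → ℝ)|m]) μ} := by
  have hpre : {f : lpMeas ℝ ℝ G 1 μ | AEStronglyMeasurable[G] (μ[(f : α → ℝ)|m]) μ} =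
      (fun f : lpMeas ℝ ℝ G 1 μ => condExpL1CLM ℝ hm μ f) ⁻¹'
        {g | AEStronglyMeasurable[G] g μ} := by
    ext f
    have hf := condExp_ae_eq_condExpL1CLM hm (L1.integrable_coeFn (f : α →₁[μ] ℝ))
    rw [Integrable.toL1_coeFn] at hf
    exact ⟨fun h => h.congr hf, fun h => h.congr hf.symm⟩
  rw [hpre]
  exact (isClosed_aestronglyMeasurable hG).preimage
    ((condExpL1CLM ℝ hm μ).continuous.comp continuous_subtype_val)

theorem aestronglyMeasurable_condExp_of_forall_indicator (hm : m ≤ m0) (hG : G ≤ m0)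
    (hP : ∀ s, MeasurableSet[G] s → AEStronglyMeasurable[G] (μ[s.indicator (1 : α → ℝ)|m]) μ)
    {f : α → ℝ} (hf : Integrable f μ) (hfG : AEStronglyMeasurable[G] f μ) :
    AEStronglyMeasurable[G] (μ[f|m]) μ := by
  refine MemLp.induction_stronglyMeasurable hG ENNReal.one_ne_top
    (fun f => AEStronglyMeasurable[G] (μ[f|m]) μ) (fun c s hs _ => ?_)
    (fun f g _ hf hg _ _ hPf hPg => ?_) (isClosed_setOf_aestronglyMeasurable_condExp hm hG)
    (fun f g hfg _ hPf => hPf.congr (condExp_congr_ae hfg))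
    (memLp_one_iff_integrable.2 hf) hfG
  · have hc : s.indicator (fun _ => c) = c • s.indicator (1 : α → ℝ) := by
      ext x
      by_cases hx : x ∈ s <;> simp [hx]
    rw [hc]
    exact ((hP s hs).const_smul c).congr (condExp_smul c _ m).symm
  · exact (hPf.add hPg).congr
      (condExp_add (memLp_one_iff_integrable.1 hf) (memLp_one_iff_integrable.1 hg) m).symm

theorem integral_mul_condExp_of_aestronglyMeasurable (hm : m ≤ m0) {f g : α → ℝ}
    (hgm : AEStronglyMeasurable[m] g μ) (hg : MemLp g 2 μ) (hf : MemLp f 2 μ) :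
    ∫ x, g x * μ[f|m] x ∂μ = ∫ x, g x * f x ∂μ :=
  calc ∫ x, g x * μ[f|m] x ∂μ = ∫ x, μ[g * f|m] x ∂μ :=
        integral_congr_ae (condExp_mul_of_aestronglyMeasurable_left hgm
          (hg.integrable_mul hf) (hf.integrable one_le_two)).symm
    _ = ∫ x, g x * f x ∂μ := integral_condExp hm

theorem aestronglyMeasurable_condExp_of_forall_aestronglyMeasurable_condExp
    {m₁ m₂ : MeasurableSpace α} (hm₁ : m₁ ≤ m0) (hm₂ : m₂ ≤ m0)
    (hpres : ∀ φ : α → ℝ, MemLp φ 2 μ → AEStronglyMeasurable[m₂] φ μ →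
      AEStronglyMeasurable[m₂] (μ[φ|m₁]) μ)
    {f : α → ℝ} (hf : MemLp f 2 μ) (hfm : AEStronglyMeasurable[m₁] f μ) :
    AEStronglyMeasurable[m₁] (μ[f|m₂]) μ := by
  set h := μ[f|m₂]
  set g := μ[h|m₁]
  have hh : MemLp h 2 μ := hf.condExp one_le_two
  have hg : MemLp g 2 μ := hh.condExp one_le_two
  set d := h - g
  have hd : MemLp d 2 μ := hh.sub hg
  have hdm₂ : AEStronglyMeasurable[m₂] d μ :=
    stronglyMeasurable_condExp.aestronglyMeasurable.sub
      (hpres h hh stronglyMeasurable_condExp.aestronglyMeasurable)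
  have hd_condExp : μ[d|m₁] =ᵐ[μ] 0 := by
    filter_upwards [condExp_sub (hh.integrable one_le_two) (hg.integrable one_le_two) m₁]
      with x hx
    rw [hx, condExp_of_stronglyMeasurable hm₁ stronglyMeasurable_condExp integrable_condExp]
    exact sub_self _
  have hd_perp : ∀ ψ : α → ℝ, MemLp ψ 2 μ → AEStronglyMeasurable[m₁] ψ μ →
      ∫ x, ψ x * d x ∂μ = 0 := fun ψ hψ hψm => by
    rw [← integral_mul_condExp_of_aestronglyMeasurable hm₁ hψm hψ hd,
      integral_congr_ae (hd_condExp.mono fun x hx => by rw [hx, Pi.zero_apply, mul_zero])]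
    exact integral_zero _ _
  have hdd : ∫ x, d x * d x ∂μ = 0 :=
    calc ∫ x, d x * d x ∂μ = ∫ x, d x * h x ∂μ - ∫ x, d x * g x ∂μ :=
          (integral_congr_ae (Eventually.of_forall fun x => mul_sub (d x) (h x) (g x))).trans
            (integral_sub (hd.integrable_mul hh) (hd.integrable_mul hg))
      _ = ∫ x, f x * d x ∂μ - ∫ x, g x * d x ∂μ := by
          rw [integral_mul_condExp_of_aestronglyMeasurable hm₂ hdm₂ hd hf]
          simp_rw [mul_comm (d _)]
      _ = 0 := by
          rw [hd_perp f hf hfm, hd_perp g hg stronglyMeasurable_condExp.aestronglyMeasurable,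
            sub_zero]
  have hd_zero : d * d =ᵐ[μ] 0 :=
    (integral_eq_zero_iff_of_nonneg (fun x => mul_self_nonneg (d x))
      (hd.integrable_mul hd)).1 hdd
  have hhg : h =ᵐ[μ] g := hd_zero.mono fun x hx => sub_eq_zero.1 (mul_self_eq_zero.1 hx)
  exact stronglyMeasurable_condExp.aestronglyMeasurable.congr hhg.symm

end CondExp

section MeasurePreserving

variable {α β : Type*} {F : MeasurableSpace β} {mα : MeasurableSpace α} {mβ : MeasurableSpace β}
  {μ : Measure α} {ν : Measure β} [IsFiniteMeasure μ]

theorem MeasureTheory.MeasurePreserving.condExp_comp_ae_eq {T : α → β}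
    (hT : MeasurePreserving T μ ν) (hF : F ≤ mβ) {φ : β → ℝ} (hφ : Integrable φ ν) :
    ν[φ|F] ∘ T =ᵐ[μ] μ[φ ∘ T|F.comap T] := by
  have : IsFiniteMeasure ν := by
    rw [← hT.map_eq]
    infer_instance
  have hcomap : F.comap T ≤ mα :=
    (comap_mono hF).trans (measurable_iff_comap_le.1 hT.measurable)
  have hsetIntegral (ψ : β → ℝ) s (hs : MeasurableSet[F] s) (hψ : AEStronglyMeasurable ψ ν) :
      ∫ x in T ⁻¹' s, ψ (T x) ∂μ = ∫ y in s, ψ y ∂ν := by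
    rw [← hT.map_eq] at hψ ⊢
    exact (setIntegral_map (hF s hs) hψ hT.measurable.aemeasurable).symm
  refine ae_eq_condExp_of_forall_setIntegral_eq hcomap (hT.integrable_comp_of_integrable hφ)
    (fun s _ _ => (hT.integrable_comp_of_integrable integrable_condExp).integrableOn) ?_
    (stronglyMeasurable_condExp.comp_measurable (comap_measurable T)).aestronglyMeasurable
  rintro _ ⟨s, hs, rfl⟩ -
  simp only [Function.comp_apply]
  rw [hsetIntegral _ s hs (stronglyMeasurable_condExp.mono hF).aestronglyMeasurable,
    hsetIntegral _ s hs hφ.1, setIntegral_condExp hF hφ hs]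

end MeasurePreserving

section Action

variable {X ι : Type*} {U : ι → X → X}

theorem measurable_invariantSets_of_comp_eq {β : Type*} [MeasurableSpace β]
    {m0 : MeasurableSpace X} {g : X → β} (hg : Measurable[m0] g) (hinv : ∀ p, g ∘ U p = g) :
    Measurable[invariantSets m0 U] g :=
  fun s hs => ⟨hg hs, fun p => by rw [← preimage_comp, hinv p]⟩

variable [AddGroup ι]

theorem comap_eq_self_of_measurableSet_preimage (hU0 : U 0 = id)
    (hUadd : ∀ p q, U (p + q) = U p ∘ U q) {F : MeasurableSpace X}
    (hFinv : ∀ p s, MeasurableSet[F] s → MeasurableSet[F] (U p ⁻¹' s)) (p : ι) :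
    F.comap (U p) = F := by
  refine le_antisymm (comap_le_iff_le_map.2 fun s hs => hFinv p s hs) fun s hs => ?_
  refine ⟨U (-p) ⁻¹' s, hFinv (-p) s hs, ?_⟩
  rw [← preimage_comp, ← hUadd, neg_add_cancel, hU0, preimage_id]

theorem aestronglyMeasurable_invariantSets_of_ae_eq_comp [Countable ι]
    (hU0 : U 0 = id) (hUadd : ∀ p q, U (p + q) = U p ∘ U q) {m0 : MeasurableSpace X}
    {ν : Measure X} (hUm : ∀ p, Measurable[m0] (U p))
    {g : X → ℝ} (hg : Measurable[m0] g) (hinv : ∀ p, g ∘ U p =ᵐ[ν] g) :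
    AEStronglyMeasurable[invariantSets m0 U] g ν := by
  have hcomp p q x : U p (U q x) = U (p + q) x := by rw [hUadd]; rfl
  -- `E` is invariant and conull, and `g` agrees on it with the invariant function `E.indicator g`.
  set E := {x | ∀ p, g (U p x) = g x}
  have hE : MeasurableSet[m0] E := by
    simp only [E, ofPred_forall]
    exact MeasurableSet.iInter fun p => measurableSet_eq_fun (hg.comp (hUm p)) hg
  have hE_inv p x : U p x ∈ E ↔ x ∈ E := by
    refine ⟨fun h q => ?_, fun h q => by rw [hcomp, h, h]⟩
    rw [← sub_add_cancel q p, ← hcomp, h, ← h (-p), hcomp, neg_add_cancel, hU0]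
    rfl
  refine ⟨E.indicator g,
    (measurable_invariantSets_of_comp_eq (hg.indicator hE) fun p => ?_).stronglyMeasurable, ?_⟩
  · ext x
    by_cases hx : x ∈ E
    · simp [hx, (hE_inv p x).2 hx, hx p]
    · simp [hx, mt (hE_inv p x).1 hx]
  · filter_upwards [ae_all_iff.2 hinv] with x hx
    exact (indicator_of_mem (s := E) hx g).symm

theorem aestronglyMeasurable_invariantSets_condExp_indicator [Countable ι]
    (hU0 : U 0 = id) (hUadd : ∀ p q, U (p + q) = U p ∘ U q) {F m0 : MeasurableSpace X}
    {ν : Measure X} [IsFiniteMeasure ν] (hUmp : ∀ p, MeasurePreserving (U p) ν ν) (hF : F ≤ m0)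
    (hFinv : ∀ p s, MeasurableSet[F] s → MeasurableSet[F] (U p ⁻¹' s)) {A : Set X}
    (hA : MeasurableSet[invariantSets m0 U] A) :
    AEStronglyMeasurable[invariantSets m0 U] (ν[A.indicator (1 : X → ℝ)|F]) ν := by
  refine aestronglyMeasurable_invariantSets_of_ae_eq_comp hU0 hUadd
    (fun p => (hUmp p).measurable) (stronglyMeasurable_condExp.mono hF).measurable fun p => ?_
  have hAp : A.indicator (1 : X → ℝ) ∘ U p = A.indicator 1 := by
    ext x
    rw [Function.comp_apply, ← indicator_comp_right, hA.2 p]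
    rfl
  have h := (hUmp p).condExp_comp_ae_eq hF (integrable_indicator_one hA.1)
  rwa [hAp, comap_eq_self_of_measurableSet_preimage hU0 hUadd hFinv p] at h

theorem aestronglyMeasurable_sup_condExp_indicator_inter [Countable ι]
    (hU0 : U 0 = id) (hUadd : ∀ p q, U (p + q) = U p ∘ U q) {C F m0 : MeasurableSpace X}
    {ν : Measure X} [IsFiniteMeasure ν] (hUmp : ∀ p, MeasurePreserving (U p) ν ν) (hF : F ≤ m0)
    (hFinv : ∀ p s, MeasurableSet[F] s → MeasurableSet[F] (U p ⁻¹' s)) (hC : C ≤ F)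
    {A B : Set X} (hA : MeasurableSet[invariantSets m0 U] A) (hB : MeasurableSet[C] B) :
    AEStronglyMeasurable[invariantSets m0 U ⊔ C] (ν[(A ∩ B).indicator (1 : X → ℝ)|F]) ν := by
  have hB1 : StronglyMeasurable[C] (B.indicator (1 : X → ℝ)) :=
    stronglyMeasurable_const.indicator hB
  have hA1 := aestronglyMeasurable_invariantSets_condExp_indicator hU0 hUadd hUmp hF hFinv hA
  rw [inter_indicator_one, mul_comm]
  refine ((hB1.mono le_sup_right).aestronglyMeasurable.mul (hA1.mono le_sup_left)).congr ?_
  refine (condExp_mul_of_stronglyMeasurable_left (hB1.mono hC) ?_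
    (integrable_indicator_one hA.1)).symm
  rw [← inter_indicator_one]
  exact integrable_indicator_one ((hF B (hC B hB)).inter hA.1)

end Action

/-- **Projection measurability, second half.**
Let `U` be a measure-preserving `ℤ²`-action on a probability space `(X, B, ν)`, `J` the
σ-algebra of `U`-invariant sets, `F` a `U`-invariant sub-σ-algebra of `B` and `C` a
sub-σ-algebra of `F`.  Then for every `f ∈ L²(F)`, the conditional expectation
`E[f | J ∨ C]` is `F`-measurable (modulo null sets). -/
theorem condexp_join_measurable_invariant
    {X : Type*} [m0 : MeasurableSpace X] (ν : Measure X) [IsProbabilityMeasure ν]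
    (U : ℤ × ℤ → X → X)
    (hU0 : U 0 = id)
    (hUadd : ∀ p q : ℤ × ℤ, U (p + q) = U p ∘ U q)
    (hUmp : ∀ p, MeasurePreserving (U p) ν ν)
    (F : MeasurableSpace X) (hF : F ≤ m0)
    (hFinv : ∀ (p : ℤ × ℤ) (s : Set X), MeasurableSet[F] s → MeasurableSet[F] (U p ⁻¹' s))
    (C : MeasurableSpace X) (hC : C ≤ F)
    (f : X → ℝ) (hf2 : MemLp f 2 ν)
    (hfmeas : AEStronglyMeasurable[F] f ν) :
    AEStronglyMeasurable[F] (ν[f|invariantSets m0 U ⊔ C]) ν := by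
  have hG : invariantSets m0 U ⊔ C ≤ m0 := sup_le (fun s hs => hs.1) (hC.trans hF)
  refine aestronglyMeasurable_condExp_of_forall_aestronglyMeasurable_condExp hF hG
    (fun φ hφ hφG => ?_) hf2 hfmeas
  refine aestronglyMeasurable_condExp_of_forall_indicator hF hG (fun t ht => ?_)
    (hφ.integrable one_le_two) hφG
  refine aestronglyMeasurable_condExp_indicator_of_isPiSystem hF hG
    (sup_eq_generateFrom_image2_inter _ _) (isPiSystem_image2_inter _ _) ?_ ht
  rintro _ ⟨A, hA, B, hB, rfl⟩
  exact aestronglyMeasurable_sup_condExp_indicator_inter hU0 hUadd hUmp hF hFinv hC hA hB
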